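/- Let n and t be positive integers. Then in the polynomial ring ℤ[z]: 1 − Σ_{I=⌊(n+1)/2⌋}^{n} C(t, 2I−n)·z^I = −Σ_{I=⌊(n+1)/2⌋}^{n} ( Σ_{i=⌊(n+1)/2⌋}^{n−1} (−1)^{I−i}·C(t+2i−n−1, 2i−n)·C(t, I−i) )·z^I + Σ_{I=0}^{n} ( Σ_{i=0}^{n−1} (−1)^{I−i}·C(t+i−1, i)·C(t, I−i) )·z^I. -/

import Mathlib

open Polynomial

/-- The generalized binomial coefficient `C(a,b)` for integers `a`, `b`:
`C(a,b) = 0` if `b < 0`, and `C(a,b) = a(a-1)⋯(a-b+1)/b!` if `b ≥ 0`. -/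
noncomputable def binom (a b : ℤ) : ℤ := if b < 0 then 0 else Ring.choose a b.toNat

/-!
`C(t + j - 1, j)` is the coefficient of `z ^ j` in `(1 - z) ^ (-t)`, and it vanishes for `j < 0`.
Reflecting `i ↦ I - i` therefore turns the inner sums, taken over all `i ≤ I`, into coefficients
of `(1 - z) ^ t (1 - z) ^ (-t) = 1` and of `(1 - z²) ^ t (1 - z) ^ (-t) = (1 + z) ^ t`, namely
`[I = 0]` and `C(t, 2I - n)`. Cutting them off at `i ≤ n - 1` only drops the term `i = I = n`,
which is `C(t + n - 1, n)` in both cases, so both sides equal `1 - ∑ C(t, 2I - n) z ^ I`.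
-/

open Finset

lemma binom_of_neg (a : ℤ) {b : ℤ} (hb : b < 0) : binom a b = 0 := if_pos hb

lemma binom_zero_right (a : ℤ) : binom a 0 = 1 := by
  simp [binom]

lemma binom_natCast (a : ℤ) (k : ℕ) : binom a k = Ring.choose a k := by
  rw [binom, if_neg (Int.natCast_nonneg k).not_gt, Int.toNat_natCast]

lemma sum_range_eq_sum_range_succ_sub_ite {M : Type*} [AddCommGroup M] (f : ℕ → M) {I n : ℕ}
    (hIn : I ≤ n) (hf : ∀ i > I, f i = 0) :
    ∑ i ∈ range n, f i = ∑ i ∈ range (I + 1), f i - if I = n then f n else 0 := by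
  rcases hIn.eq_or_lt with rfl | hlt
  · rw [sum_range_succ, if_pos rfl, add_sub_cancel_right]
  · rw [if_neg hlt.ne, sub_zero]
    exact eventually_constant_sum (fun i hi ↦ hf i hi) hlt

namespace PowerSeries

lemma coeff_invOneSubPow {S : Type*} [CommRing S] (t j : ℕ) :
    coeff j (invOneSubPow S t : S⟦X⟧) = ((Ring.choose ((t : ℤ) + j - 1) j : ℤ) : S) := by
  have h := congrArg (coeff j) (rescale_neg_one_invOneSubPow (A := S) t)
  simp only [coeff_rescale, binomialSeries_coeff, Ring.choose_neg, Units.smul_def,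
    Int.coe_negOnePow_natCast, smul_eq_mul, zsmul_eq_mul, mul_one, Int.cast_mul, Int.cast_pow,
    Int.cast_neg, Int.cast_one] at h
  exact (isUnit_neg_one.pow j).mul_left_cancel h

lemma coeff_X_pow_mul_invOneSubPow (t a m : ℕ) :
    coeff m ((X : ℤ⟦X⟧) ^ a * (invOneSubPow ℤ t : ℤ⟦X⟧)) =
      binom (t + ((m : ℤ) - a) - 1) ((m : ℤ) - a) := by
  rw [coeff_X_pow_mul']
  split_ifs with h
  · rw [coeff_invOneSubPow, ← Nat.cast_sub h, binom_natCast, Int.cast_id]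
  · rw [binom_of_neg _ (by omega)]

lemma one_sub_X_pow_pow {R : Type*} [CommRing R] (c t : ℕ) :
    ((1 : R⟦X⟧) - X ^ c) ^ t =
      ∑ k ∈ range (t + 1), C ((-1) ^ k * (t.choose k : R)) * X ^ (c * k) := by
  rw [sub_eq_neg_add, add_pow]
  refine sum_congr rfl fun k _ ↦ ?_
  rw [one_pow, mul_one, neg_pow, ← pow_mul]
  simp only [map_mul, map_pow, map_neg, map_one, map_natCast]
  ring

lemma coeff_one_sub_X_pow_pow_mul {R : Type*} [CommRing R] (F : R⟦X⟧) {c t m N : ℕ}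
    (hN : m < c * N) :
    coeff m ((1 - X ^ c) ^ t * F) =
      ∑ k ∈ range N, (-1) ^ k * (t.choose k : R) * coeff m (X ^ (c * k) * F) := by
  set f : ℕ → R := fun k ↦ (-1) ^ k * (t.choose k : R) * coeff m (X ^ (c * k) * F)
  have hvanish : ∀ k ≥ min N (t + 1), f k = 0 := by
    intro k hk
    rcases min_le_iff.1 hk with hkN | hkt
    · simp only [f, coeff_X_pow_mul', if_neg (show ¬ c * k ≤ m by nlinarith), mul_zero]
    · simp only [f, Nat.choose_eq_zero_of_lt (show t < k by omega), Nat.cast_zero, mul_zero,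
        zero_mul]
  calc coeff m ((1 - X ^ c) ^ t * F) = ∑ k ∈ range (t + 1), f k := by
        rw [one_sub_X_pow_pow, sum_mul, map_sum]
        exact sum_congr rfl fun k _ ↦ by rw [mul_assoc, coeff_C_mul]
    _ = ∑ k ∈ range (min N (t + 1)), f k := eventually_constant_sum hvanish (min_le_right _ _)
    _ = ∑ k ∈ range N, f k := (eventually_constant_sum hvanish (min_le_left _ _)).symm

end PowerSeries

lemma sum_negOnePow_mul_binom_mul_binom_eq_coeff (t c s I : ℕ) (hc : 0 < c) (hs : s ≤ c * I) :
    ∑ i ∈ range (I + 1), (((I : ℤ) - i).negOnePow : ℤ) *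
        binom (t + ((c * i : ℕ) - s : ℤ) - 1) ((c * i : ℕ) - s : ℤ) * binom t ((I : ℤ) - i) =
      PowerSeries.coeff (c * I - s)
        ((1 - PowerSeries.X ^ c) ^ t * (PowerSeries.invOneSubPow ℤ t : PowerSeries ℤ)) := by
  rw [PowerSeries.coeff_one_sub_X_pow_pow_mul _ (N := I + 1) (by rw [mul_add]; omega),
    ← sum_range_reflect]
  refine sum_congr rfl fun k hk ↦ ?_
  have hkI : k ≤ I := Nat.lt_succ_iff.mp (mem_range.mp hk)
  rw [PowerSeries.coeff_X_pow_mul_invOneSubPow, show I + 1 - 1 - k = I - k by omega,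
    Nat.cast_sub hkI, sub_sub_cancel, Int.coe_negOnePow_natCast, binom_natCast,
    Ring.choose_natCast]
  push_cast [hkI, hs]
  ring_nf

lemma sum_negOnePow_mul_binom_mul_binom_eq_ite_zero (t I : ℕ) :
    ∑ i ∈ range (I + 1), (((I : ℤ) - i).negOnePow : ℤ) * binom ((t : ℤ) + i - 1) i *
        binom t ((I : ℤ) - i) = if I = 0 then 1 else 0 := by
  have h := sum_negOnePow_mul_binom_mul_binom_eq_coeff t 1 0 I one_pos (Nat.zero_le _)
  rw [pow_one, one_mul, Nat.sub_zero, ← PowerSeries.invOneSubPow_inv_eq_one_sub_pow,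
    Units.inv_val, PowerSeries.coeff_one] at h
  simpa using h

lemma sum_negOnePow_mul_binom_two_mul_sub_mul_binom_eq_binom (t n I : ℕ) (hnI : n ≤ 2 * I) :
    ∑ i ∈ range (I + 1), (((I : ℤ) - i).negOnePow : ℤ) *
        binom ((t : ℤ) + 2 * i - n - 1) (2 * i - n) * binom t ((I : ℤ) - i) =
      binom t (2 * I - n) := by
  have hfactor : ((1 : PowerSeries ℤ) - PowerSeries.X ^ 2) ^ t *
      (PowerSeries.invOneSubPow ℤ t : PowerSeries ℤ) = (1 + PowerSeries.X) ^ t := by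
    rw [show (1 : PowerSeries ℤ) - PowerSeries.X ^ 2 = (1 + PowerSeries.X) * (1 - PowerSeries.X)
      by ring, mul_pow, mul_assoc, ← PowerSeries.invOneSubPow_inv_eq_one_sub_pow, Units.inv_val,
      mul_one]
  have h := sum_negOnePow_mul_binom_mul_binom_eq_coeff t 2 n I two_pos hnI
  rw [hfactor, ← PowerSeries.binomialSeries_nat (R := ℤ), PowerSeries.binomialSeries_coeff,
    smul_eq_mul, mul_one] at h
  rw [show (2 : ℤ) * I - n = ((2 * I - n : ℕ) : ℤ) by omega, binom_natCast, ← h]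
  refine sum_congr rfl fun i _ ↦ ?_
  push_cast
  ring_nf

lemma sum_range_negOnePow_mul_binom_mul_binom (t n I : ℕ) (hIn : I ≤ n) :
    ∑ i ∈ range n, (((I : ℤ) - i).negOnePow : ℤ) * binom ((t : ℤ) + i - 1) i *
        binom t ((I : ℤ) - i) =
      (if I = 0 then 1 else 0) - if I = n then binom ((t : ℤ) + n - 1) n else 0 := by
  rw [sum_range_eq_sum_range_succ_sub_ite _ hIn fun i hi ↦ by
      rw [binom_of_neg (t : ℤ) (show (I : ℤ) - i < 0 by omega), mul_zero],
    sum_negOnePow_mul_binom_mul_binom_eq_ite_zero]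
  by_cases h : I = n
  · subst h
    rw [if_pos rfl, if_pos rfl, sub_self, Int.negOnePow_zero, binom_zero_right, Units.val_one,
      one_mul, mul_one]
  · rw [if_neg h, if_neg h]

lemma sum_Icc_negOnePow_mul_binom_mul_binom (t n I : ℕ) (hn : 0 < n) (hI : (n + 1) / 2 ≤ I)
    (hIn : I ≤ n) :
    ∑ i ∈ Icc ((n + 1) / 2) (n - 1), (((I : ℤ) - i).negOnePow : ℤ) *
        binom ((t : ℤ) + 2 * i - n - 1) (2 * i - n) * binom t ((I : ℤ) - i) =
      binom t (2 * I - n) - if I = n then binom ((t : ℤ) + n - 1) n else 0 := by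
  set g : ℕ → ℤ := fun i ↦ (((I : ℤ) - i).negOnePow : ℤ) *
    binom ((t : ℤ) + 2 * i - n - 1) (2 * i - n) * binom t ((I : ℤ) - i)
  have hlow : ∑ i ∈ range ((n + 1) / 2), g i = 0 :=
    sum_eq_zero fun i hi ↦ by
      rw [mem_range] at hi
      simp only [g, binom_of_neg _ (show 2 * (i : ℤ) - n < 0 by omega), mul_zero, zero_mul]
  have hIco : ∑ i ∈ Ico ((n + 1) / 2) n, g i = ∑ i ∈ range n, g i := by
    rw [← sum_range_add_sum_Ico _ (show (n + 1) / 2 ≤ n by omega), hlow, zero_add]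
  rw [Icc_sub_one_right_eq_Ico_of_not_isMin (by simpa using hn.ne'), hIco,
    sum_range_eq_sum_range_succ_sub_ite _ hIn fun i hi ↦ by
      simp only [g]; rw [binom_of_neg (t : ℤ) (show (I : ℤ) - i < 0 by omega), mul_zero],
    sum_negOnePow_mul_binom_two_mul_sub_mul_binom_eq_binom _ _ _ (by omega)]
  by_cases h : I = n
  · subst h
    simp only [g, sub_self, Int.negOnePow_zero, binom_zero_right, Units.val_one,
      one_mul, mul_one]
    ring_nf
  · rw [if_neg h, if_neg h]

lemma sum_range_C_mul_X_pow (t n : ℕ) :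
    ∑ I ∈ range (n + 1), C (∑ i ∈ range n, (((I : ℤ) - i).negOnePow : ℤ) *
        binom ((t : ℤ) + i - 1) i * binom t ((I : ℤ) - i)) * X ^ I =
      1 - C (binom ((t : ℤ) + n - 1) n) * X ^ n := by
  rw [sum_congr rfl fun I hI ↦ by
    rw [sum_range_negOnePow_mul_binom_mul_binom t n I (mem_range_succ_iff.1 hI)]]
  simp only [map_sub, sub_mul, sum_sub_distrib, apply_ite C, map_zero, map_one, ite_mul, zero_mul,
    one_mul, sum_ite_eq', mem_range, pow_zero]
  simp

lemma sum_Icc_C_mul_X_pow (t n : ℕ) (hn : 0 < n) :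
    ∑ I ∈ Icc ((n + 1) / 2) n, C (∑ i ∈ Icc ((n + 1) / 2) (n - 1),
        (((I : ℤ) - i).negOnePow : ℤ) * binom ((t : ℤ) + 2 * i - n - 1) (2 * i - n) *
          binom t ((I : ℤ) - i)) * X ^ I =
      ∑ I ∈ Icc ((n + 1) / 2) n, C (binom t (2 * I - n)) * X ^ I -
        C (binom ((t : ℤ) + n - 1) n) * X ^ n := by
  rw [sum_congr rfl fun I hI ↦ by
    rw [sum_Icc_negOnePow_mul_binom_mul_binom t n I hn (mem_Icc.1 hI).1 (mem_Icc.1 hI).2]]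
  simp only [map_sub, sub_mul, sum_sub_distrib, apply_ite C, map_zero, ite_mul, zero_mul,
    sum_ite_eq']
  rw [if_pos (mem_Icc.2 ⟨by omega, le_rfl⟩)]

theorem poly_identity_ShowMe1_general (n t : ℕ) (hn : 0 < n) :
    (1 : ℤ[X]) -
      ∑ I ∈ Finset.Icc ((n + 1) / 2) n,
        Polynomial.C (binom (t : ℤ) (2 * (I : ℤ) - (n : ℤ))) * X ^ I =
    -(∑ I ∈ Finset.Icc ((n + 1) / 2) n,
        Polynomial.C (∑ i ∈ Finset.Icc ((n + 1) / 2) (n - 1),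
          (((I : ℤ) - (i : ℤ)).negOnePow : ℤ) *
            binom ((t : ℤ) + 2 * (i : ℤ) - (n : ℤ) - 1) (2 * (i : ℤ) - (n : ℤ)) *
            binom (t : ℤ) ((I : ℤ) - (i : ℤ))) * X ^ I)
    + ∑ I ∈ Finset.range (n + 1),
        Polynomial.C (∑ i ∈ Finset.range n,
          (((I : ℤ) - (i : ℤ)).negOnePow : ℤ) * binom ((t : ℤ) + (i : ℤ) - 1) (i : ℤ) *
            binom (t : ℤ) ((I : ℤ) - (i : ℤ))) * X ^ I := by
  rw [sum_Icc_C_mul_X_pow t n hn, sum_range_C_mul_X_pow]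
  ring

theorem poly_identity_ShowMe1 (n t : ℕ) (hn : 0 < n) (ht : 0 < t) :
    (1 : ℤ[X]) -
      ∑ I ∈ Finset.Icc ((n + 1) / 2) n,
        Polynomial.C (binom (t : ℤ) (2 * (I : ℤ) - (n : ℤ))) * X ^ I =
    -(∑ I ∈ Finset.Icc ((n + 1) / 2) n,
        Polynomial.C (∑ i ∈ Finset.Icc ((n + 1) / 2) (n - 1),
          (((I : ℤ) - (i : ℤ)).negOnePow : ℤ) *
            binom ((t : ℤ) + 2 * (i : ℤ) - (n : ℤ) - 1) (2 * (i : ℤ) - (n : ℤ)) *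
            binom (t : ℤ) ((I : ℤ) - (i : ℤ))) * X ^ I)
    + ∑ I ∈ Finset.range (n + 1),
        Polynomial.C (∑ i ∈ Finset.range n,
          (((I : ℤ) - (i : ℤ)).negOnePow : ℤ) * binom ((t : ℤ) + (i : ℤ) - 1) (i : ℤ) *
            binom (t : ℤ) ((I : ℤ) - (i : ℤ))) * X ^ I :=
  poly_identity_ShowMe1_general n t hn
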